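/- arXiv:2108.01768 — 3 statements merged into one kernel-verified Lean document; each statement's English description precedes it below -/
import Mathlib

section
/- If the propensity score is correctly specified, i.e. ĝ = g where g(W) = E[A|W] ∈ (0,1) a.s., then for any bounded measurable function Q̂¹ of W, E[A(Y - Q̂¹(W)) / (g(W)·E[A/g(W)])] + E[Q̂¹(W)] = E[E[Y|A=1,W]]. -/
open MeasureTheory

lemma integral_mul_eq_integral_mul_condexp {Ω : Type*} {m mΩ : MeasurableSpace Ω}
    (hm : m ≤ mΩ) {μ : Measure Ω} [IsProbabilityMeasure μ] {h f : Ω → ℝ}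
    (hh : StronglyMeasurable[m] h) (hf : Integrable f μ)
    (hhf : Integrable (fun ω => h ω * f ω) μ) :
    ∫ ω, h ω * f ω ∂μ = ∫ ω, h ω * (μ[f|m]) ω ∂μ := by
  have heq : μ[h * f|m] =ᵐ[μ] h * μ[f|m] :=
    condExp_mul_of_stronglyMeasurable_left hh hhf hf
  calc ∫ ω, h ω * f ω ∂μ = ∫ ω, (μ[h * f|m]) ω ∂μ := (integral_condExp hm).symm
    _ = ∫ ω, h ω * (μ[f|m]) ω ∂μ := integral_congr_ae heq

/-- If the propensity score is correctly specified, then for any bounded measurable Q̂¹ of W,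
E[A(Y - Q̂¹(W)) / (g(W)·E[A/g(W)])] + E[Q̂¹(W)] = E[E[Y|A=1,W]] = E[Q¹(W)]. -/
theorem stmt_5 {Ω β : Type*} [MeasurableSpace β]
    {mΩ : MeasurableSpace Ω} {μ : Measure Ω} [IsProbabilityMeasure μ]
    (W : Ω → β) (hW : Measurable W)
    (A : Ω → ℝ) (hAmeas : Measurable A) (hA01 : ∀ ω, A ω = 0 ∨ A ω = 1)
    (Y : Ω → ℝ) (hY : Integrable Y μ)
    (g : β → ℝ) (hg : Measurable g)
    (c : ℝ) (hc : 0 < c) (hgbdd : ∀ b, c ≤ g b ∧ g b ≤ 1 - c)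
    (hcondA : μ[A | MeasurableSpace.comap W inferInstance] =ᵐ[μ] fun ω => g (W ω))
    (Q1 Q0 : β → ℝ) (hQ1 : Measurable Q1) (hQ0 : Measurable Q0)
    (hcondY : μ[Y | MeasurableSpace.comap (fun ω => (A ω, W ω)) inferInstance]
      =ᵐ[μ] fun ω => A ω * Q1 (W ω) + (1 - A ω) * Q0 (W ω))
    (Qhat : β → ℝ) (hQhat : Measurable Qhat) (C : ℝ) (hQhatBdd : ∀ b, |Qhat b| ≤ C)
    (hintQ1 : Integrable (fun ω => Q1 (W ω)) μ) :
    (∫ ω, A ω * (Y ω - Qhat (W ω)) / (g (W ω) * ∫ ω', A ω' / g (W ω') ∂μ) ∂μ)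
      + ∫ ω, Qhat (W ω) ∂μ
      = ∫ ω, Q1 (W ω) ∂μ := by
  set m : MeasurableSpace Ω := MeasurableSpace.comap W inferInstance with hm_def
  set m2 : MeasurableSpace Ω :=
    MeasurableSpace.comap (fun ω => (A ω, W ω)) inferInstance with hm2_def
  have hm : m ≤ mΩ := hW.comap_le
  have hm2 : m2 ≤ mΩ := (hAmeas.prodMk hW).comap_le
  -- basic facts about g
  have hgpos : ∀ b, 0 < g b := fun b => lt_of_lt_of_le hc (hgbdd b).1
  have hgne : ∀ b, g b ≠ 0 := fun b => (hgpos b).ne'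
  have hginv_le : ∀ b, (g b)⁻¹ ≤ c⁻¹ := fun b =>
    inv_anti₀ hc (hgbdd b).1
  have hginv_pos : ∀ b, 0 < (g b)⁻¹ := fun b => inv_pos.mpr (hgpos b)
  -- bounds on A
  have hA_abs : ∀ ω, |A ω| ≤ 1 := by
    intro ω; rcases hA01 ω with h | h <;> simp [h]
  -- measurability w.r.t. sub-σ-algebras
  have hWm : Measurable[m] W := measurable_iff_comap_le.mpr le_rfl
  have hpairm2 : Measurable[m2] (fun ω => (A ω, W ω)) := measurable_iff_comap_le.mpr le_rfl
  have hAm2 : Measurable[m2] A := measurable_fst.comp hpairm2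
  have hWm2 : Measurable[m2] W := measurable_snd.comp hpairm2
  -- integrability facts
  have hintA : Integrable A μ :=
    Integrable.mono' (integrable_const 1) hAmeas.aestronglyMeasurable
      (Filter.Eventually.of_forall fun ω => by simpa using hA_abs ω)
  have hintQhatW : Integrable (fun ω => Qhat (W ω)) μ :=
    Integrable.mono' (integrable_const C) ((hQhat.comp hW)).aestronglyMeasurable
      (Filter.Eventually.of_forall fun ω => by simpa using hQhatBdd (W ω))
  -- Step 1 : ∫ A / g(W) = 1
  have hstep1 : ∫ ω', A ω' / g (W ω') ∂μ = 1 := by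
    have hh : StronglyMeasurable[m] (fun ω => (g (W ω))⁻¹) :=
      ((hg.comp hWm).inv).stronglyMeasurable
    have hint : Integrable (fun ω => (g (W ω))⁻¹ * A ω) μ := by
      refine Integrable.mono' (integrable_const c⁻¹) ?_ ?_
      · exact (((hg.comp hW).inv).mul hAmeas).aestronglyMeasurable
      · refine Filter.Eventually.of_forall fun ω => ?_
        have h1 : |(g (W ω))⁻¹ * A ω| ≤ (g (W ω))⁻¹ * 1 := by
          rw [abs_mul, abs_of_pos (hginv_pos _)]
          exact mul_le_mul_of_nonneg_left (hA_abs ω) (hginv_pos _).le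
        calc ‖(g (W ω))⁻¹ * A ω‖ ≤ (g (W ω))⁻¹ * 1 := h1
          _ ≤ c⁻¹ := by rw [mul_one]; exact hginv_le _
    have key := integral_mul_eq_integral_mul_condexp hm hh hintA hint
    have hcongr : ∫ ω, (g (W ω))⁻¹ * (μ[A|m]) ω ∂μ = ∫ ω, (1 : ℝ) ∂μ := by
      refine integral_congr_ae ?_
      filter_upwards [hcondA] with ω hω
      rw [hω, inv_mul_cancel₀ (hgne _)]
    calc ∫ ω', A ω' / g (W ω') ∂μ = ∫ ω', (g (W ω'))⁻¹ * A ω' ∂μ := by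
          congr 1; funext ω; rw [div_eq_mul_inv, mul_comm]
      _ = ∫ ω, (g (W ω))⁻¹ * (μ[A|m]) ω ∂μ := key
      _ = ∫ ω, (1 : ℝ) ∂μ := hcongr
      _ = 1 := by simp
  -- generic Step : for integrable φ∘W, ∫ (φ(W)/g(W)) * A = ∫ φ(W)
  have hstepgen : ∀ φ : β → ℝ, Measurable φ → Integrable (fun ω => φ (W ω)) μ →
      ∫ ω, φ (W ω) / g (W ω) * A ω ∂μ = ∫ ω, φ (W ω) ∂μ := by
    intro φ hφ hintφ
    have hh : StronglyMeasurable[m] (fun ω => φ (W ω) / g (W ω)) :=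
      ((hφ.comp hWm).div (hg.comp hWm)).stronglyMeasurable
    have hint : Integrable (fun ω => φ (W ω) / g (W ω) * A ω) μ := by
      refine Integrable.mono' (hintφ.norm.const_mul c⁻¹) ?_ ?_
      · exact (((hφ.comp hW).div (hg.comp hW)).mul hAmeas).aestronglyMeasurable
      · refine Filter.Eventually.of_forall fun ω => ?_
        have : ‖φ (W ω) / g (W ω) * A ω‖ = |φ (W ω)| * (g (W ω))⁻¹ * |A ω| := by
          rw [Real.norm_eq_abs, abs_mul, abs_div, abs_of_pos (hgpos _), div_eq_mul_inv]
        rw [this]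
        calc |φ (W ω)| * (g (W ω))⁻¹ * |A ω| ≤ |φ (W ω)| * c⁻¹ * 1 := by
              apply mul_le_mul (mul_le_mul_of_nonneg_left (hginv_le _) (abs_nonneg _))
                (hA_abs ω) (abs_nonneg _)
              positivity
          _ = c⁻¹ * ‖φ (W ω)‖ := by rw [mul_one, mul_comm, Real.norm_eq_abs]
    have key := integral_mul_eq_integral_mul_condexp hm hh hintA hint
    rw [key]
    refine integral_congr_ae ?_
    filter_upwards [hcondA] with ω hω
    rw [hω, div_mul_cancel₀ _ (hgne _)]
  -- Step 2 : ∫ A * Y / g(W) = ∫ Q1(W)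
  have hintAYg : Integrable (fun ω => A ω / g (W ω) * Y ω) μ := by
    refine Integrable.mono' (hY.norm.const_mul c⁻¹) ?_ ?_
    · exact (hAmeas.div (hg.comp hW)).aestronglyMeasurable.mul hY.aestronglyMeasurable
    · refine Filter.Eventually.of_forall fun ω => ?_
      have : ‖A ω / g (W ω) * Y ω‖ = |A ω| * (g (W ω))⁻¹ * |Y ω| := by
        rw [Real.norm_eq_abs, abs_mul, abs_div, abs_of_pos (hgpos _), div_eq_mul_inv]
      rw [this]
      calc |A ω| * (g (W ω))⁻¹ * |Y ω| ≤ 1 * c⁻¹ * |Y ω| := by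
            apply mul_le_mul_of_nonneg_right _ (abs_nonneg _)
            exact mul_le_mul (hA_abs ω) (hginv_le _) (hginv_pos _).le zero_le_one
        _ = c⁻¹ * ‖Y ω‖ := by rw [one_mul, Real.norm_eq_abs]
  have hstep2 : ∫ ω, A ω / g (W ω) * Y ω ∂μ = ∫ ω, Q1 (W ω) ∂μ := by
    have hh : StronglyMeasurable[m2] (fun ω => A ω / g (W ω)) :=
      (hAm2.div (hg.comp hWm2)).stronglyMeasurable
    have key := integral_mul_eq_integral_mul_condexp hm2 hh hY hintAYg
    rw [key]
    have hcongr : ∫ ω, A ω / g (W ω) * (μ[Y|m2]) ω ∂μ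
        = ∫ ω, Q1 (W ω) / g (W ω) * A ω ∂μ := by
      refine integral_congr_ae ?_
      filter_upwards [hcondY] with ω hω
      rw [hω]
      rcases hA01 ω with h | h <;> simp [h] <;> ring
    rw [hcongr, hstepgen Q1 hQ1 hintQ1]
  -- Step 3 : ∫ A * Qhat(W) / g(W) = ∫ Qhat(W)
  have hstep3 : ∫ ω, A ω / g (W ω) * Qhat (W ω) ∂μ = ∫ ω, Qhat (W ω) ∂μ := by
    have : ∫ ω, A ω / g (W ω) * Qhat (W ω) ∂μ
        = ∫ ω, Qhat (W ω) / g (W ω) * A ω ∂μ := by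
      congr 1; funext ω; ring
    rw [this, hstepgen Qhat hQhat hintQhatW]
  -- integrability of A/g(W) * Qhat(W)
  have hintAQg : Integrable (fun ω => A ω / g (W ω) * Qhat (W ω)) μ := by
    refine Integrable.mono' (integrable_const (c⁻¹ * C)) ?_ ?_
    · exact ((hAmeas.div (hg.comp hW)).mul (hQhat.comp hW)).aestronglyMeasurable
    · refine Filter.Eventually.of_forall fun ω => ?_
      have : ‖A ω / g (W ω) * Qhat (W ω)‖ = |A ω| * (g (W ω))⁻¹ * |Qhat (W ω)| := by
        rw [Real.norm_eq_abs, abs_mul, abs_div, abs_of_pos (hgpos _), div_eq_mul_inv]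
      rw [this]
      have hC0 : (0:ℝ) ≤ C := le_trans (abs_nonneg _) (hQhatBdd (W ω))
      calc |A ω| * (g (W ω))⁻¹ * |Qhat (W ω)| ≤ 1 * c⁻¹ * C := by
            apply mul_le_mul _ (hQhatBdd (W ω)) (abs_nonneg _) (by positivity)
            exact mul_le_mul (hA_abs ω) (hginv_le _) (hginv_pos _).le zero_le_one
        _ = c⁻¹ * C := by rw [one_mul]
  -- put everything together
  have hmain : (fun ω => A ω * (Y ω - Qhat (W ω)) / (g (W ω) * ∫ ω', A ω' / g (W ω') ∂μ))
      = fun ω => A ω / g (W ω) * Y ω - A ω / g (W ω) * Qhat (W ω) := by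
    funext ω
    rw [hstep1, mul_one]
    field_simp
  rw [hmain, integral_sub hintAYg hintAQg, hstep2, hstep3]
  ring
end

section
/- If the outcome model is correctly specified, i.e. Q̂¹(W) = E[Y|A=1,W] almost surely, then for any measurable ĥ¹ bounded away from 0, E[A(Y - Q̂¹(W))/ĥ¹(W)] = 0, and hence the nAIPW population functional E[A(Y-Q̂¹)/(ĝ·E[A/ĝ])] + E[Q̂¹] equals E[E[Y|A=1,W]]. -/
open MeasureTheory

/-! Conditioning on `(A, W)` replaces `Y` by `A Q¹(W) + (1 - A) Q⁰(W)` inside any integral against a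
bounded `σ(A, W)`-measurable weight; for weights of the form `A g(W)` this is `A g(W) Q¹(W)`,
since `A² = A` and `A (1 - A) = 0`. Hence the treated residual `A (Y - Q¹(W))` is orthogonal to every
bounded `g(W)`, and both `1 / ĥ¹` and `1 / (ĝ E[A/ĝ])` are such weights. -/

theorem integral_mul_condExp_of_bound {Ω : Type*} {m mΩ : MeasurableSpace Ω} {μ : Measure Ω}
    [IsFiniteMeasure μ] (hm : m ≤ mΩ) {f g : Ω → ℝ} (hf : StronglyMeasurable[m] f)
    (hg : Integrable g μ) (C : ℝ) (hfC : ∀ᵐ ω ∂μ, ‖f ω‖ ≤ C) :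
    ∫ ω, f ω * μ[g | m] ω ∂μ = ∫ ω, f ω * g ω ∂μ :=
  calc ∫ ω, f ω * μ[g | m] ω ∂μ = ∫ ω, μ[f * g | m] ω ∂μ :=
        integral_congr_ae (condExp_stronglyMeasurable_mul_of_bound hm hf hg C hfC).symm
    _ = ∫ ω, f ω * g ω ∂μ := integral_condExp hm

theorem abs_inv_le_inv_of_le {c x : ℝ} (hc : 0 < c) (hx : c ≤ x) : |x⁻¹| ≤ c⁻¹ := by
  rw [abs_of_pos (inv_pos.mpr (hc.trans_le hx))]
  exact inv_anti₀ hc hx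

theorem integral_treated_residual_mul_eq_zero {Ω β : Type*} [MeasurableSpace β]
    {mΩ : MeasurableSpace Ω} {μ : Measure Ω} [IsFiniteMeasure μ]
    {W : Ω → β} (hW : Measurable W) {A : Ω → ℝ} (hA : Measurable A)
    (hA01 : ∀ ω, A ω = 0 ∨ A ω = 1) {Y : Ω → ℝ} (hY : Integrable Y μ) {Q1 Q0 : β → ℝ}
    (hcondY : μ[Y | MeasurableSpace.comap (fun ω => (A ω, W ω)) inferInstance]
      =ᵐ[μ] fun ω => A ω * Q1 (W ω) + (1 - A ω) * Q0 (W ω))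
    (hQ1 : Integrable (fun ω => Q1 (W ω)) μ) {g : β → ℝ} (hg : Measurable g) {C : ℝ}
    (hgC : ∀ b, |g b| ≤ C) :
    ∫ ω, A ω * (Y ω - Q1 (W ω)) * g (W ω) ∂μ = 0 := by
  set m := MeasurableSpace.comap (fun ω => (A ω, W ω)) inferInstance
  have hm : m ≤ mΩ := (hA.prodMk hW).comap_le
  have hAW : Measurable[m] fun ω => (A ω, W ω) := comap_measurable _
  set f : Ω → ℝ := fun ω => A ω * g (W ω)
  have hf : StronglyMeasurable[m] f :=
    ((measurable_fst.comp hAW).mul (hg.comp (measurable_snd.comp hAW))).stronglyMeasurable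
  have hfC : ∀ ω, ‖f ω‖ ≤ C := fun ω => by
    have hA1 : |A ω| ≤ 1 := by rcases hA01 ω with h | h <;> simp [h]
    calc ‖f ω‖ = |A ω| * |g (W ω)| := abs_mul _ _
      _ ≤ |g (W ω)| := mul_le_of_le_one_left (abs_nonneg _) hA1
      _ ≤ C := hgC _
  have hfmeas : AEStronglyMeasurable[mΩ] f μ := (hf.mono hm).aestronglyMeasurable
  have hfY : Integrable (fun ω => f ω * Y ω) μ := hY.bdd_mul hfmeas (.of_forall hfC)
  have hfQ1 : Integrable (fun ω => f ω * Q1 (W ω)) μ := hQ1.bdd_mul hfmeas (.of_forall hfC)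
  have hcond_weighted : (fun ω => f ω * μ[Y | m] ω) =ᵐ[μ] fun ω => f ω * Q1 (W ω) := by
    filter_upwards [hcondY] with ω hω
    rcases hA01 ω with h | h <;> simp [f, hω, h]
  calc ∫ ω, A ω * (Y ω - Q1 (W ω)) * g (W ω) ∂μ
      = ∫ ω, (f ω * Y ω - f ω * Q1 (W ω)) ∂μ := integral_congr_ae (.of_forall fun ω => by ring)
    _ = ∫ ω, f ω * μ[Y | m] ω ∂μ - ∫ ω, f ω * Q1 (W ω) ∂μ := by
      rw [integral_sub hfY hfQ1, integral_mul_condExp_of_bound hm hf hY C (.of_forall hfC)]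
    _ = 0 := by rw [integral_congr_ae hcond_weighted, sub_self]

theorem stmt_6_general {Ω β : Type*} [MeasurableSpace β]
    {mΩ : MeasurableSpace Ω} {μ : Measure Ω} [IsProbabilityMeasure μ]
    (W : Ω → β) (hW : Measurable W)
    (A : Ω → ℝ) (hAmeas : Measurable A) (hA01 : ∀ ω, A ω = 0 ∨ A ω = 1)
    (Y : Ω → ℝ) (hY : Integrable Y μ)
    (Q1 Q0 : β → ℝ)
    (hcondY : μ[Y | MeasurableSpace.comap (fun ω => (A ω, W ω)) inferInstance]
      =ᵐ[μ] fun ω => A ω * Q1 (W ω) + (1 - A ω) * Q0 (W ω))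
    (Qhat : β → ℝ)
    (hQhatCorrect : (fun ω => Qhat (W ω)) =ᵐ[μ] fun ω => Q1 (W ω))
    (h1 : β → ℝ) (hh1 : Measurable h1)
    (c : ℝ) (hc : 0 < c) (hh1bdd : ∀ b, c ≤ h1 b)
    (ghat : β → ℝ) (hghat : Measurable ghat) (hghatbdd : ∀ b, c ≤ ghat b ∧ ghat b ≤ 1 - c)
    (hintQ1 : Integrable (fun ω => Q1 (W ω)) μ) :
    (∫ ω, A ω * (Y ω - Qhat (W ω)) / h1 (W ω) ∂μ) = 0
    ∧ (∫ ω, A ω * (Y ω - Qhat (W ω)) / (ghat (W ω) * ∫ ω', A ω' / ghat (W ω') ∂μ) ∂μ)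
        + ∫ ω, Qhat (W ω) ∂μ
      = ∫ ω, Q1 (W ω) ∂μ := by
  have hresidual : ∀ h : β → ℝ, Measurable h → ∀ C, (∀ b, |(h b)⁻¹| ≤ C) →
      ∫ ω, A ω * (Y ω - Qhat (W ω)) / h (W ω) ∂μ = 0 := fun h hh C hC => by
    rw [← integral_treated_residual_mul_eq_zero hW hAmeas hA01 hY hcondY hintQ1 hh.inv hC]
    refine integral_congr_ae ?_
    filter_upwards [hQhatCorrect] with ω hω
    simp only [hω, div_eq_mul_inv, Pi.inv_apply]
  set K := ∫ ω', A ω' / ghat (W ω') ∂μ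
  refine ⟨hresidual h1 hh1 c⁻¹ fun b => abs_inv_le_inv_of_le hc (hh1bdd b), ?_⟩
  rw [hresidual (fun b => ghat b * K) (hghat.mul_const K) (c⁻¹ * |K|⁻¹), zero_add,
    integral_congr_ae hQhatCorrect]
  intro b
  -- no case split on `K = 0` is needed: then `|K|⁻¹ = 0` and both sides vanish
  rw [mul_inv, abs_mul, abs_inv K]
  exact mul_le_mul_of_nonneg_right (abs_inv_le_inv_of_le hc (hghatbdd b).1) (by positivity)

/-- If the outcome model is correctly specified (Q̂¹(W) = E[Y|A=1,W] a.s.), then for any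
measurable ĥ¹ bounded away from 0, E[A(Y - Q̂¹(W))/ĥ¹(W)] = 0, and hence the nAIPW population
functional E[A(Y-Q̂¹)/(ĝ·E[A/ĝ])] + E[Q̂¹] equals E[E[Y|A=1,W]] = E[Q¹(W)]. -/
theorem stmt_6 {Ω β : Type*} [MeasurableSpace β]
    {mΩ : MeasurableSpace Ω} {μ : Measure Ω} [IsProbabilityMeasure μ]
    (W : Ω → β) (hW : Measurable W)
    (A : Ω → ℝ) (hAmeas : Measurable A) (hA01 : ∀ ω, A ω = 0 ∨ A ω = 1)
    (Y : Ω → ℝ) (hY : Integrable Y μ)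
    (Q1 Q0 : β → ℝ) (hQ1 : Measurable Q1) (hQ0 : Measurable Q0)
    (hcondY : μ[Y | MeasurableSpace.comap (fun ω => (A ω, W ω)) inferInstance]
      =ᵐ[μ] fun ω => A ω * Q1 (W ω) + (1 - A ω) * Q0 (W ω))
    (Qhat : β → ℝ) (hQhatMeas : Measurable Qhat)
    (hQhatCorrect : (fun ω => Qhat (W ω)) =ᵐ[μ] fun ω => Q1 (W ω))
    (h1 : β → ℝ) (hh1 : Measurable h1)
    (c : ℝ) (hc : 0 < c) (hh1bdd : ∀ b, c ≤ h1 b)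
    (ghat : β → ℝ) (hghat : Measurable ghat) (hghatbdd : ∀ b, c ≤ ghat b ∧ ghat b ≤ 1 - c)
    (hintQ1 : Integrable (fun ω => Q1 (W ω)) μ)
    (hintQhat : Integrable (fun ω => Qhat (W ω)) μ) :
    (∫ ω, A ω * (Y ω - Qhat (W ω)) / h1 (W ω) ∂μ) = 0
    ∧ (∫ ω, A ω * (Y ω - Qhat (W ω)) / (ghat (W ω) * ∫ ω', A ω' / ghat (W ω') ∂μ) ∂μ)
        + ∫ ω, Qhat (W ω) ∂μ
      = ∫ ω, Q1 (W ω) ∂μ :=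
  stmt_6_general (mΩ := mΩ) W hW A hAmeas hA01 Y hY Q1 Q0 hcondY Qhat hQhatCorrect h1 hh1 c hc
    hh1bdd ghat hghat hghatbdd hintQ1
end

section
/- Rate double robustness: if for each sample size n the nuisance estimates satisfy (E[(g - ĥⁿᵏ)²])^{1/2}·(E[(Qᵏ - Q̂ⁿᵏ)²])^{1/2} = o(n^{-1/2}) for k = 0,1 and ĥⁿᵏ ∈ [c₁, 1-c₂] for constants c₁, c₂ > 0, then √n·R(P, P̂ₙ) → 0 as n → ∞. -/
open MeasureTheory Filter Asymptotics

/-! The remainder term `E[(a/h - 1) q]` equals `E[(a - h) q / h]`, so with `h ≥ c > 0` it is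
bounded by `c⁻¹ ‖a - h‖₂ ‖q‖₂` by Cauchy–Schwarz. Hence `R(P, P̂ₙ) = O(r₁ₙ + r₀ₙ)` where `rₖₙ`
are the products of `L²` errors, and `rₖₙ = o(n^{-1/2})` gives `√n R(P, P̂ₙ) → 0`. -/

section

variable {Ω : Type*} {mΩ : MeasurableSpace Ω} {μ : Measure Ω}

theorem integral_abs_mul_abs_le_sqrt_mul_sqrt {f q : Ω → ℝ} (hf : MemLp f 2 μ)
    (hq : MemLp q 2 μ) :
    ∫ ω, |f ω| * |q ω| ∂μ ≤ √(∫ ω, f ω ^ 2 ∂μ) * √(∫ ω, q ω ^ 2 ∂μ) := by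
  have h2 : ENNReal.ofReal 2 = 2 := by norm_num
  have := integral_mul_norm_le_Lp_mul_Lq Real.HolderConjugate.two_two
    (h2 ▸ hf : MemLp f (ENNReal.ofReal 2) μ) (h2 ▸ hq : MemLp q (ENNReal.ofReal 2) μ)
  simpa only [Real.norm_eq_abs, Real.rpow_two, sq_abs, ← Real.sqrt_eq_rpow] using this

theorem abs_integral_div_sub_one_mul_le {a h q : Ω → ℝ} {c : ℝ} (hc : 0 < c)
    (hh : ∀ᵐ ω ∂μ, c ≤ h ω) (hah : MemLp (fun ω => a ω - h ω) 2 μ) (hq : MemLp q 2 μ) :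
    |∫ ω, (a ω / h ω - 1) * q ω ∂μ| ≤
      c⁻¹ * (√(∫ ω, (a ω - h ω) ^ 2 ∂μ) * √(∫ ω, q ω ^ 2 ∂μ)) := by
  have hpoint : ∀ᵐ ω ∂μ, |(a ω / h ω - 1) * q ω| ≤ c⁻¹ * (|a ω - h ω| * |q ω|) := by
    filter_upwards [hh] with ω hω
    have hpos : 0 < h ω := hc.trans_le hω
    rw [div_sub_one hpos.ne', abs_mul, abs_div, abs_of_pos hpos, ← mul_assoc, inv_mul_eq_div]
    gcongr
  calc |∫ ω, (a ω / h ω - 1) * q ω ∂μ|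
      ≤ ∫ ω, |(a ω / h ω - 1) * q ω| ∂μ := abs_integral_le_integral_abs
    _ ≤ ∫ ω, c⁻¹ * (|a ω - h ω| * |q ω|) ∂μ :=
        integral_mono_of_nonneg (ae_of_all _ fun _ => abs_nonneg _)
          ((hah.abs.integrable_mul hq.abs).const_mul _) hpoint
    _ = c⁻¹ * ∫ ω, |a ω - h ω| * |q ω| ∂μ := integral_const_mul _ _
    _ ≤ c⁻¹ * (√(∫ ω, (a ω - h ω) ^ 2 ∂μ) * √(∫ ω, q ω ^ 2 ∂μ)) := by
        gcongr
        exact integral_abs_mul_abs_le_sqrt_mul_sqrt hah hq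

theorem memLp_sub_of_mem_unitInterval [IsFiniteMeasure μ] {p : ENNReal} {a h : Ω → ℝ}
    (ha : AEStronglyMeasurable a μ) (hh : AEStronglyMeasurable h μ)
    (ha01 : ∀ ω, a ω ∈ Set.Icc 0 1) (hh01 : ∀ ω, h ω ∈ Set.Icc 0 1) :
    MemLp (fun ω => a ω - h ω) p μ :=
  MemLp.of_bound (ha.sub hh) 1 <| ae_of_all _ fun ω =>
    abs_sub_le_of_nonneg_of_le (ha01 ω).1 (ha01 ω).2 (hh01 ω).1 (hh01 ω).2

end

theorem tendsto_sqrt_mul_of_isLittleO_rpow_neg_half {u : ℕ → ℝ}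
    (hu : u =o[atTop] fun n : ℕ => (n : ℝ) ^ (-(1 : ℝ) / 2)) :
    Tendsto (fun n : ℕ => √n * u n) atTop (nhds 0) := by
  have hone : (fun n : ℕ => √n * (n : ℝ) ^ (-(1 : ℝ) / 2)) =ᶠ[atTop] fun _ => (1 : ℝ) := by
    filter_upwards [eventually_gt_atTop 0] with n hn
    rw [Real.sqrt_eq_rpow, ← Real.rpow_add (Nat.cast_pos.mpr hn)]
    norm_num
  refine (isLittleO_one_iff ℝ).mp ?_
  exact ((isBigO_refl (fun n : ℕ => √n) atTop).mul_isLittleO hu).congr' EventuallyEq.rfl hone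

theorem stmt_9_general {Ω β : Type*} [MeasurableSpace β]
    {mΩ : MeasurableSpace Ω} {μ : Measure Ω} [IsProbabilityMeasure μ]
    (W : Ω → β) (hW : Measurable W)
    (g : β → ℝ) (hg : Measurable g) (hg01 : ∀ b, 0 ≤ g b ∧ g b ≤ 1)
    (Q1 Q0 : β → ℝ)
    (h1 h0 Qh1 Qh0 : ℕ → β → ℝ)
    (hh1 : ∀ n, Measurable (h1 n)) (hh0 : ∀ n, Measurable (h0 n))
    (c1 c2 : ℝ) (hc1 : 0 < c1) (hc2 : 0 < c2)
    (hbdd1 : ∀ n b, c1 ≤ h1 n b ∧ h1 n b ≤ 1 - c2)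
    (hbdd0 : ∀ n b, c1 ≤ h0 n b ∧ h0 n b ≤ 1 - c2)
    (hL2Q1 : ∀ n, MemLp (fun ω => Q1 (W ω) - Qh1 n (W ω)) 2 μ)
    (hL2Q0 : ∀ n, MemLp (fun ω => Q0 (W ω) - Qh0 n (W ω)) 2 μ)
    (hrate1 : (fun n : ℕ => Real.sqrt (∫ ω, (g (W ω) - h1 n (W ω)) ^ 2 ∂μ)
        * Real.sqrt (∫ ω, (Q1 (W ω) - Qh1 n (W ω)) ^ 2 ∂μ))
      =o[atTop] fun n : ℕ => (n : ℝ) ^ (-(1 : ℝ) / 2))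
    (hrate0 : (fun n : ℕ => Real.sqrt (∫ ω, ((1 - g (W ω)) - h0 n (W ω)) ^ 2 ∂μ)
        * Real.sqrt (∫ ω, (Q0 (W ω) - Qh0 n (W ω)) ^ 2 ∂μ))
      =o[atTop] fun n : ℕ => (n : ℝ) ^ (-(1 : ℝ) / 2)) :
    Tendsto (fun n : ℕ => Real.sqrt n *
        ((∫ ω, (g (W ω) / h1 n (W ω) - 1) * (Q1 (W ω) - Qh1 n (W ω)) ∂μ)
          + ∫ ω, ((1 - g (W ω)) / h0 n (W ω) - 1) * (Q0 (W ω) - Qh0 n (W ω)) ∂μ))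
      atTop (nhds 0) := by
  have hmemIcc : ∀ (k : ℕ → β → ℝ), (∀ n b, c1 ≤ k n b ∧ k n b ≤ 1 - c2) →
      ∀ n ω, k n (W ω) ∈ Set.Icc 0 1 := fun k hk n ω =>
    ⟨hc1.le.trans (hk n (W ω)).1, (hk n (W ω)).2.trans (by linarith)⟩
  have hterm1 n := abs_integral_div_sub_one_mul_le (a := fun ω => g (W ω)) hc1
    (ae_of_all μ fun ω => (hbdd1 n (W ω)).1)
    (memLp_sub_of_mem_unitInterval (hg.comp hW).aestronglyMeasurable
      ((hh1 n).comp hW).aestronglyMeasurable (fun ω => hg01 (W ω)) (hmemIcc h1 hbdd1 n))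
    (hL2Q1 n)
  have hterm0 n := abs_integral_div_sub_one_mul_le (a := fun ω => 1 - g (W ω)) hc1
    (ae_of_all μ fun ω => (hbdd0 n (W ω)).1)
    (memLp_sub_of_mem_unitInterval ((hg.const_sub 1).comp hW).aestronglyMeasurable
      ((hh0 n).comp hW).aestronglyMeasurable
      (fun ω => ⟨sub_nonneg.mpr (hg01 (W ω)).2, sub_le_self 1 (hg01 (W ω)).1⟩)
      (hmemIcc h0 hbdd0 n))
    (hL2Q0 n)
  refine tendsto_sqrt_mul_of_isLittleO_rpow_neg_half <| IsBigO.trans_isLittleO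
    (IsBigO.of_bound c1⁻¹ (Eventually.of_forall fun n => ?_)) (hrate1.add hrate0)
  rw [Real.norm_eq_abs, Real.norm_eq_abs]
  refine (abs_add_le _ _).trans ((add_le_add (hterm1 n) (hterm0 n)).trans ?_)
  rw [← mul_add]
  gcongr
  exact le_abs_self _

/-- Rate double robustness: if √E[(g-ĥₙ¹)²]·√E[(Q¹-Q̂ₙ¹)²] = o(n^{-1/2}) and
√E[((1-g)-ĥₙ⁰)²]·√E[(Q⁰-Q̂ₙ⁰)²] = o(n^{-1/2}), with ĥₙᵏ ∈ [c₁, 1-c₂], then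
√n·R(P, P̂ₙ) → 0, where R(P, P̂ₙ) = E[(g/ĥₙ¹-1)(Q¹-Q̂ₙ¹)] + E[((1-g)/ĥₙ⁰-1)(Q⁰-Q̂ₙ⁰)]. -/
theorem stmt_9 {Ω β : Type*} [MeasurableSpace β]
    {mΩ : MeasurableSpace Ω} {μ : Measure Ω} [IsProbabilityMeasure μ]
    (W : Ω → β) (hW : Measurable W)
    (g : β → ℝ) (hg : Measurable g) (hg01 : ∀ b, 0 ≤ g b ∧ g b ≤ 1)
    (Q1 Q0 : β → ℝ) (hQ1 : Measurable Q1) (hQ0 : Measurable Q0)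
    (h1 h0 Qh1 Qh0 : ℕ → β → ℝ)
    (hh1 : ∀ n, Measurable (h1 n)) (hh0 : ∀ n, Measurable (h0 n))
    (hQh1 : ∀ n, Measurable (Qh1 n)) (hQh0 : ∀ n, Measurable (Qh0 n))
    (c1 c2 : ℝ) (hc1 : 0 < c1) (hc2 : 0 < c2)
    (hbdd1 : ∀ n b, c1 ≤ h1 n b ∧ h1 n b ≤ 1 - c2)
    (hbdd0 : ∀ n b, c1 ≤ h0 n b ∧ h0 n b ≤ 1 - c2)
    (hL2Q1 : ∀ n, MemLp (fun ω => Q1 (W ω) - Qh1 n (W ω)) 2 μ)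
    (hL2Q0 : ∀ n, MemLp (fun ω => Q0 (W ω) - Qh0 n (W ω)) 2 μ)
    (hrate1 : (fun n : ℕ => Real.sqrt (∫ ω, (g (W ω) - h1 n (W ω)) ^ 2 ∂μ)
        * Real.sqrt (∫ ω, (Q1 (W ω) - Qh1 n (W ω)) ^ 2 ∂μ))
      =o[atTop] fun n : ℕ => (n : ℝ) ^ (-(1 : ℝ) / 2))
    (hrate0 : (fun n : ℕ => Real.sqrt (∫ ω, ((1 - g (W ω)) - h0 n (W ω)) ^ 2 ∂μ)
        * Real.sqrt (∫ ω, (Q0 (W ω) - Qh0 n (W ω)) ^ 2 ∂μ))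
      =o[atTop] fun n : ℕ => (n : ℝ) ^ (-(1 : ℝ) / 2)) :
    Tendsto (fun n : ℕ => Real.sqrt n *
        ((∫ ω, (g (W ω) / h1 n (W ω) - 1) * (Q1 (W ω) - Qh1 n (W ω)) ∂μ)
          + ∫ ω, ((1 - g (W ω)) / h0 n (W ω) - 1) * (Q0 (W ω) - Qh0 n (W ω)) ∂μ))
      atTop (nhds 0) :=
  stmt_9_general (mΩ := mΩ) W hW g hg hg01 Q1 Q0 h1 h0 Qh1 Qh0 hh1 hh0 c1 c2 hc1 hc2 hbdd1 hbdd0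
    hL2Q1 hL2Q0 hrate1 hrate0
end
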